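/- arXiv:2209.12667 — 5 statements merged into one kernel-verified Lean document; each statement's English description precedes it below -/
import Mathlib

section
/- Let (X, 𝒜, μ) be a measure space, let ε > 0 and Δ > 0, and set σ = 2Δ/ε. Let g, g' : X → ℝ be measurable functions with |g(x) − g'(x)| ≤ Δ for all x ∈ X, and suppose 0 < ∫_X exp(−g/σ) dμ < ∞ and 0 < ∫_X exp(−g'/σ) dμ < ∞. Then for every measurable set S ⊆ X, (∫_S exp(−g(x)/σ) dμ(x)) / (∫_X exp(−g(x)/σ) dμ(x)) ≤ e^ε · (∫_S exp(−g'(x)/σ) dμ(x)) / (∫_X exp(−g'(x)/σ) dμ(x)). -/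
open MeasureTheory

/-- KNG mechanism privacy guarantee (Theorem 1): if `|g - g'| ≤ Δ` pointwise and
`σ = 2Δ/ε`, then the normalized densities proportional to `exp(-g/σ)` and
`exp(-g'/σ)` satisfy ε-differential privacy. -/
theorem kng_privacy {X : Type*} [MeasurableSpace X] (μ : Measure X)
    (ε Δ : ℝ) (hε : 0 < ε) (hΔ : 0 < Δ) (σ : ℝ) (hσ : σ = 2 * Δ / ε)
    (g g' : X → ℝ) (hg : Measurable g) (hg' : Measurable g')
    (hclose : ∀ x, |g x - g' x| ≤ Δ)
    (hInt : Integrable (fun x => Real.exp (-g x / σ)) μ)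
    (hInt' : Integrable (fun x => Real.exp (-g' x / σ)) μ)
    (hpos : 0 < ∫ x, Real.exp (-g x / σ) ∂μ)
    (hpos' : 0 < ∫ x, Real.exp (-g' x / σ) ∂μ) :
    ∀ S : Set X, MeasurableSet S →
      (∫ x in S, Real.exp (-g x / σ) ∂μ) / (∫ x, Real.exp (-g x / σ) ∂μ) ≤
        Real.exp ε *
          ((∫ x in S, Real.exp (-g' x / σ) ∂μ) / (∫ x, Real.exp (-g' x / σ) ∂μ)) := by
  intro S hS
  have hσpos : 0 < σ := by rw [hσ]; positivity
  have hΔσ : Δ / σ = ε / 2 := by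
    rw [hσ]; field_simp
  -- pointwise bounds
  have hpt : ∀ x, Real.exp (-g x / σ) ≤ Real.exp (ε / 2) * Real.exp (-g' x / σ) := by
    intro x
    rw [← Real.exp_add]
    apply Real.exp_le_exp.2
    have h1 : g' x - g x ≤ Δ := by
      have := hclose x; rw [abs_le] at this; linarith [this.1]
    have h2 : (g' x - g x) / σ ≤ Δ / σ := by gcongr
    rw [hΔσ] at h2
    have expand : -g x / σ = (g' x - g x) / σ + (-g' x / σ) := by ring
    linarith [expand ▸ le_refl (-g x / σ), h2]
  have hpt' : ∀ x, Real.exp (-g' x / σ) ≤ Real.exp (ε / 2) * Real.exp (-g x / σ) := by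
    intro x
    rw [← Real.exp_add]
    apply Real.exp_le_exp.2
    have h1 : g x - g' x ≤ Δ := by
      have := hclose x; rw [abs_le] at this; linarith [this.2]
    have h2 : (g x - g' x) / σ ≤ Δ / σ := by gcongr
    rw [hΔσ] at h2
    have expand : -g' x / σ = (g x - g' x) / σ + (-g x / σ) := by ring
    linarith [expand ▸ le_refl (-g' x / σ)]
  -- numerator bound
  have hnum : (∫ x in S, Real.exp (-g x / σ) ∂μ) ≤
      Real.exp (ε / 2) * ∫ x in S, Real.exp (-g' x / σ) ∂μ := by
    rw [← integral_const_mul]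
    exact integral_mono (hInt.restrict) ((hInt'.restrict).const_mul _) fun x => hpt x
  -- denominator bound
  have hden : (∫ x, Real.exp (-g' x / σ) ∂μ) ≤
      Real.exp (ε / 2) * ∫ x, Real.exp (-g x / σ) ∂μ := by
    rw [← integral_const_mul]
    exact integral_mono hInt' (hInt.const_mul _) fun x => hpt' x
  have hnum' : 0 ≤ ∫ x in S, Real.exp (-g' x / σ) ∂μ :=
    integral_nonneg fun x => (Real.exp_pos _).le
  -- combine
  rw [div_le_iff₀ hpos]
  calc (∫ x in S, Real.exp (-g x / σ) ∂μ)
      ≤ Real.exp (ε / 2) * ∫ x in S, Real.exp (-g' x / σ) ∂μ := hnum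
    _ ≤ Real.exp ε * ((∫ x in S, Real.exp (-g' x / σ) ∂μ) /
          (∫ x, Real.exp (-g' x / σ) ∂μ)) * (∫ x, Real.exp (-g x / σ) ∂μ) := by
        rw [div_eq_mul_inv]
        have key : Real.exp (ε / 2) ≤
            Real.exp ε * (∫ x, Real.exp (-g' x / σ) ∂μ)⁻¹ * (∫ x, Real.exp (-g x / σ) ∂μ) := by
          have heq : Real.exp (ε / 2) * Real.exp (ε / 2) = Real.exp ε := by
            rw [← Real.exp_add]; ring_nf
          have h3 : Real.exp (ε / 2) * (∫ x, Real.exp (-g' x / σ) ∂μ) ≤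
              Real.exp ε * ∫ x, Real.exp (-g x / σ) ∂μ := by
            calc Real.exp (ε / 2) * (∫ x, Real.exp (-g' x / σ) ∂μ)
                ≤ Real.exp (ε / 2) * (Real.exp (ε / 2) * ∫ x, Real.exp (-g x / σ) ∂μ) :=
                  mul_le_mul_of_nonneg_left hden (Real.exp_pos _).le
              _ = Real.exp ε * ∫ x, Real.exp (-g x / σ) ∂μ := by rw [← heq]; ring
          have hrw : Real.exp ε * (∫ x, Real.exp (-g' x / σ) ∂μ)⁻¹ *
              (∫ x, Real.exp (-g x / σ) ∂μ) =
              (Real.exp ε * ∫ x, Real.exp (-g x / σ) ∂μ) /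
                (∫ x, Real.exp (-g' x / σ) ∂μ) := by
            field_simp
          rw [hrw, le_div_iff₀ hpos']
          exact h3
        calc Real.exp (ε / 2) * ∫ x in S, Real.exp (-g' x / σ) ∂μ
            ≤ (Real.exp ε * (∫ x, Real.exp (-g' x / σ) ∂μ)⁻¹ *
                (∫ x, Real.exp (-g x / σ) ∂μ)) * ∫ x in S, Real.exp (-g' x / σ) ∂μ :=
              mul_le_mul_of_nonneg_right key hnum'
          _ = Real.exp ε * ((∫ x in S, Real.exp (-g' x / σ) ∂μ) *
                (∫ x, Real.exp (-g' x / σ) ∂μ)⁻¹) * (∫ x, Real.exp (-g x / σ) ∂μ) := by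
              ring
end

section
/- Let d ≥ 1, let 0 < r < π/4, let p₀ ∈ S^d, and let n ≥ 1. Let D = {x₁, …, xₙ} and D' = {x₁, …, x_{n−1}, xₙ'} be two datasets with all points in the geodesic ball B_r(p₀). Then for every x ∈ B_r(p₀), ‖(1/n)·Σ_{i=1}^{n} log_x x_i − (1/n)·(Σ_{i=1}^{n−1} log_x x_i + log_x xₙ')‖ ≤ (2r/n)·(2 − 2r·cot(2r)), where cot t = cos t / sin t. -/
open Real InnerProductGeometry
open scoped RealInnerProductSpace

/-! Only the `n`-th summand changes, so the left side is `‖log_x a - log_x b‖ / n`. With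
`v_q = q - ⟪x, q⟫ x` the tangential projection, `‖v_q‖ = sin θ` and `log_x q = (θ / sin θ) v_q`
for `θ = ρ(x, q)`, so `log_x q` is within `θ - sin θ ≤ 2r - sin 2r` of `v_q`; the projection
`q ↦ v_q` is `1`-Lipschitz and the chord `‖a - b‖` is at most `2r`. This bounds
`‖log_x a - log_x b‖` by `6r - 2 sin 2r`, which is at most `2r (2 - 2r cot 2r)` by the Taylor
bounds `sin T ≥ T - T³/6` and `cos T ≤ 1 - T²/2 + T⁴/24`. -/

/-- Geodesic distance on the unit sphere `S^d ⊂ ℝ^(d+1)`: `ρ(p,q) = arccos ⟨p,q⟩`. -/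
noncomputable def sphDist {d : ℕ} (p q : EuclideanSpace ℝ (Fin (d + 1))) : ℝ :=
  Real.arccos (inner ℝ p q)

/-- Inverse exponential (log) map on the unit sphere:
`log_p q = (θ / sin θ) (q - cos θ • p)` with `θ = ρ(p,q)` (and `log_p p = 0`,
which the formula yields since `0/0 = 0` in Lean). -/
noncomputable def sphLog {d : ℕ} (p q : EuclideanSpace ℝ (Fin (d + 1))) :
    EuclideanSpace ℝ (Fin (d + 1)) :=
  (sphDist p q / Real.sin (sphDist p q)) • (q - Real.cos (sphDist p q) • p)

theorem cos_le_one_sub_sq_div_two_add_pow_four_div (x : ℝ) :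
    cos x ≤ 1 - x ^ 2 / 2 + x ^ 4 / 24 := by
  wlog hx : 0 ≤ x
  · simpa [Even.neg_pow (by decide : Even 4)] using this (-x) (by linarith)
  let f (t : ℝ) : ℝ := 1 - t ^ 2 / 2 + t ^ 4 / 24 - cos t
  have hderiv (t : ℝ) : deriv f t = sin t - (t - t ^ 3 / 6) := by
    simp (disch := fun_prop) [f]
    ring
  have hmono : MonotoneOn f (Set.Ici 0) := by
    apply monotoneOn_of_deriv_nonneg (convex_Ici 0) (by fun_prop) (by fun_prop)
    intro t ht
    rw [interior_Ici] at ht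
    rw [hderiv]
    linarith [sin_ge_sub_cube (le_of_lt ht)]
  simpa [f] using hmono Set.self_mem_Ici hx hx

theorem sub_sin_le_sub_sin {a b : ℝ} (h : a ≤ b) : a - sin a ≤ b - sin b := by
  linarith [le_of_abs_le (abs_sin_sub_sin_le b a), abs_of_nonneg (sub_nonneg.2 h)]

theorem three_mul_sub_two_mul_sin_le {T : ℝ} (hT0 : 0 < T) (hT : T ^ 2 ≤ 3) :
    3 * T - 2 * sin T ≤ T * (2 - T * (cos T / sin T)) := by
  have hsin := sin_ge_sub_cube hT0.le
  have hsin_pos : 0 < sin T := by nlinarith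
  have hcos := cos_le_one_sub_sq_div_two_add_pow_four_div T
  -- `(T - T³/6)(T - T³/3) - T² (1 - T²/2 + T⁴/24) = T⁶ / 72 ≥ 0`
  have hkey : T ^ 2 * cos T ≤ sin T * (2 * sin T - T) := by
    have hcubic_nonneg : 0 ≤ T - T ^ 3 / 3 := by nlinarith
    have hcubic_le : T - T ^ 3 / 3 ≤ 2 * sin T - T := by linarith
    nlinarith [mul_le_mul hsin hcubic_le hcubic_nonneg hsin_pos.le, mul_le_mul_of_nonneg_left hcos (sq_nonneg T),
      pow_nonneg (sq_nonneg T) 3]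
  have : T * (T * (cos T / sin T)) ≤ 2 * sin T - T := by
    rw [← mul_assoc, mul_div_assoc', div_le_iff₀ hsin_pos]
    linarith
  linarith

theorem Finset.sum_sub_sum_update {ι α M : Type*} [Fintype ι] [DecidableEq ι] [AddCommGroup M]
    (g : α → M) (f : ι → α) (k : ι) (y : α) :
    ∑ i, g (f i) - ∑ i, g (Function.update f k y i) = g (f k) - g y := by
  simp_rw [Function.apply_update (fun _ => g)]
  rw [Finset.sum_update_of_mem (Finset.mem_univ k), Finset.sdiff_singleton_eq_erase,
    ← Finset.add_sum_erase _ _ (Finset.mem_univ k)]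
  abel

theorem norm_div_norm_smul_sub_self_le {E : Type*} [NormedAddCommGroup E] [NormedSpace ℝ E]
    {v : E} {t : ℝ} (ht : ‖v‖ ≤ t) : ‖(t / ‖v‖) • v - v‖ ≤ t - ‖v‖ := by
  rcases eq_or_ne v 0 with rfl | hv
  · simpa using ht
  have hv' : 0 < ‖v‖ := norm_pos_iff.2 hv
  have hcoef : 0 ≤ t / ‖v‖ - 1 := by rwa [sub_nonneg, one_le_div hv']
  have hsmul : (t / ‖v‖) • v - v = (t / ‖v‖ - 1) • v := by rw [sub_smul, one_smul]
  rw [hsmul, norm_smul, Real.norm_eq_abs, abs_of_nonneg hcoef, sub_one_mul,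
    div_mul_cancel₀ _ hv'.ne']

section InnerProductSpace

variable {V : Type*} [NormedAddCommGroup V] [InnerProductSpace ℝ V]

theorem norm_sub_inner_smul_sq {x : V} (hx : ‖x‖ = 1) (y : V) :
    ‖y - ⟪x, y⟫ • x‖ ^ 2 = ‖y‖ ^ 2 - ⟪x, y⟫ ^ 2 := by
  rw [norm_sub_sq_real, real_inner_smul_right, norm_smul, hx, real_inner_comm y x,
    Real.norm_eq_abs, mul_one, sq_abs]
  ring

theorem norm_sub_inner_smul_le {x : V} (hx : ‖x‖ = 1) (y : V) :
    ‖y - ⟪x, y⟫ • x‖ ≤ ‖y‖ := by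
  refine (pow_le_pow_iff_left₀ (norm_nonneg _) (norm_nonneg y) two_ne_zero).1 ?_
  rw [norm_sub_inner_smul_sq hx]
  linarith [sq_nonneg ⟪x, y⟫]

theorem norm_sub_inner_smul_eq_sin_angle {x y : V} (hx : ‖x‖ = 1) (hy : ‖y‖ = 1) :
    ‖y - ⟪x, y⟫ • x‖ = sin (angle x y) := by
  refine (pow_left_inj₀ (norm_nonneg _) (sin_angle_nonneg x y) two_ne_zero).1 ?_
  rw [norm_sub_inner_smul_sq hx, hy, inner_eq_cos_angle_of_norm_eq_one hx hy, sin_sq]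
  ring

theorem norm_sub_le_angle {x y : V} (hx : ‖x‖ = 1) (hy : ‖y‖ = 1) : ‖x - y‖ ≤ angle x y := by
  refine (pow_le_pow_iff_left₀ (norm_nonneg _) (angle_nonneg x y) two_ne_zero).1 ?_
  rw [norm_sub_sq_real, hx, hy, inner_eq_cos_angle_of_norm_eq_one hx hy]
  linarith [one_sub_sq_div_two_le_cos (x := angle x y)]

end InnerProductSpace

section Sphere

variable {d : ℕ}

local notation "E" => EuclideanSpace ℝ (Fin (d + 1))

theorem sphDist_eq_angle {p q : E} (hp : ‖p‖ = 1) (hq : ‖q‖ = 1) :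
    sphDist p q = angle p q := by
  simp [sphDist, angle, hp, hq]

theorem sphLog_eq_smul {x q : E} (hx : ‖x‖ = 1) (hq : ‖q‖ = 1) :
    sphLog x q = (angle x q / ‖q - ⟪x, q⟫ • x‖) • (q - ⟪x, q⟫ • x) := by
  rw [sphLog, sphDist_eq_angle hx hq, norm_sub_inner_smul_eq_sin_angle hx hq,
    inner_eq_cos_angle_of_norm_eq_one hx hq]

theorem norm_sphLog_sub_le {x q : E} (hx : ‖x‖ = 1) (hq : ‖q‖ = 1) :
    ‖sphLog x q - (q - ⟪x, q⟫ • x)‖ ≤ angle x q - sin (angle x q) := by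
  rw [sphLog_eq_smul hx hq, ← norm_sub_inner_smul_eq_sin_angle hx hq]
  apply norm_div_norm_smul_sub_self_le
  rw [norm_sub_inner_smul_eq_sin_angle hx hq]
  exact sin_le (angle_nonneg x q)

theorem norm_sphLog_sub_sphLog_le {x a b : E} (hx : ‖x‖ = 1) (ha : ‖a‖ = 1) (hb : ‖b‖ = 1) :
    ‖sphLog x a - sphLog x b‖ ≤
      ‖a - b‖ + (angle x a - sin (angle x a)) + (angle x b - sin (angle x b)) := by
  have hdecomp : sphLog x a - sphLog x b =
      (sphLog x a - (a - ⟪x, a⟫ • x)) - (sphLog x b - (b - ⟪x, b⟫ • x))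
        + ((a - b) - ⟪x, a - b⟫ • x) := by
    rw [inner_sub_right, sub_smul]
    abel
  rw [hdecomp]
  calc _ ≤ ‖sphLog x a - (a - ⟪x, a⟫ • x)‖ + ‖sphLog x b - (b - ⟪x, b⟫ • x)‖
        + ‖(a - b) - ⟪x, a - b⟫ • x‖ :=
          (norm_add_le _ _).trans (by gcongr; exact norm_sub_le _ _)
    _ ≤ _ := by
      linarith [norm_sphLog_sub_le hx ha, norm_sphLog_sub_le hx hb,
        norm_sub_inner_smul_le hx (a - b)]

theorem norm_sphLog_sub_sphLog_le_of_sphDist_lt {p₀ x a b : E} {r : ℝ} (hp₀ : ‖p₀‖ = 1)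
    (hx : ‖x‖ = 1) (ha : ‖a‖ = 1) (hb : ‖b‖ = 1) (hxr : sphDist p₀ x < r)
    (har : sphDist p₀ a < r) (hbr : sphDist p₀ b < r) :
    ‖sphLog x a - sphLog x b‖ ≤ 2 * r + 2 * (2 * r - sin (2 * r)) := by
  rw [sphDist_eq_angle hp₀ hx] at hxr
  rw [sphDist_eq_angle hp₀ ha] at har
  rw [sphDist_eq_angle hp₀ hb] at hbr
  have hchord : ‖a - b‖ ≤ 2 * r := by
    linarith [norm_sub_le_norm_sub_add_norm_sub a p₀ b, norm_sub_le_angle ha hp₀,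
      norm_sub_le_angle hp₀ hb, angle_comm a p₀]
  have hxa : angle x a ≤ 2 * r := by
    linarith [angle_le_angle_add_angle x p₀ a, angle_comm x p₀]
  have hxb : angle x b ≤ 2 * r := by
    linarith [angle_le_angle_add_angle x p₀ b, angle_comm x p₀]
  linarith [norm_sphLog_sub_sphLog_le hx ha hb, sub_sin_le_sub_sin hxa, sub_sin_le_sub_sin hxb]

end Sphere

theorem sphere_mean_gradient_sensitivity_general (d n : ℕ) (hn : 1 ≤ n)
    (r : ℝ) (hr0 : 0 < r) (hr : r < Real.pi / 4)
    (p₀ : EuclideanSpace ℝ (Fin (d + 1))) (hp₀ : ‖p₀‖ = 1)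
    (xs : Fin n → EuclideanSpace ℝ (Fin (d + 1)))
    (hxs : ∀ i, ‖xs i‖ = 1 ∧ sphDist p₀ (xs i) < r)
    (xn' : EuclideanSpace ℝ (Fin (d + 1)))
    (hxn' : ‖xn'‖ = 1 ∧ sphDist p₀ xn' < r)
    (xs' : Fin n → EuclideanSpace ℝ (Fin (d + 1)))
    (hxs' : xs' = Function.update xs ⟨n - 1, Nat.sub_lt hn one_pos⟩ xn')
    (x : EuclideanSpace ℝ (Fin (d + 1))) (hx : ‖x‖ = 1 ∧ sphDist p₀ x < r) :
    ‖(1 / (n : ℝ)) • ∑ i, sphLog x (xs i) - (1 / (n : ℝ)) • ∑ i, sphLog x (xs' i)‖ ≤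
      (2 * r / n) * (2 - 2 * r * (Real.cos (2 * r) / Real.sin (2 * r))) := by
  set k : Fin n := ⟨n - 1, Nat.sub_lt hn one_pos⟩
  have hlog := norm_sphLog_sub_sphLog_le_of_sphDist_lt hp₀ hx.1 (hxs k).1 hxn'.1 hx.2 (hxs k).2
    hxn'.2
  have hscalar := three_mul_sub_two_mul_sin_le (T := 2 * r) (by positivity)
    (by nlinarith [pi_lt_d2])
  rw [hxs', ← smul_sub, Finset.sum_sub_sum_update, norm_smul, Real.norm_eq_abs,
    abs_of_nonneg (by positivity), one_div_mul_eq_div, div_mul_eq_mul_div]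
  gcongr
  linarith

/-- Global sensitivity bound (Theorem 2) on the unit sphere: for datasets
`D = {x₁,…,xₙ}` and `D' = {x₁,…,x_{n-1},xₙ'}` in a geodesic ball `B_r(p₀)` with
`0 < r < π/4`, for every `x ∈ B_r(p₀)`,
`‖(1/n)Σ log_x x_i − (1/n)(Σ_{i<n} log_x x_i + log_x xₙ')‖ ≤ (2r/n)(2 − 2r·cot(2r))`. -/
theorem sphere_mean_gradient_sensitivity (d n : ℕ) (hd : 1 ≤ d) (hn : 1 ≤ n)
    (r : ℝ) (hr0 : 0 < r) (hr : r < Real.pi / 4)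
    (p₀ : EuclideanSpace ℝ (Fin (d + 1))) (hp₀ : ‖p₀‖ = 1)
    (xs : Fin n → EuclideanSpace ℝ (Fin (d + 1)))
    (hxs : ∀ i, ‖xs i‖ = 1 ∧ sphDist p₀ (xs i) < r)
    (xn' : EuclideanSpace ℝ (Fin (d + 1)))
    (hxn' : ‖xn'‖ = 1 ∧ sphDist p₀ xn' < r)
    (xs' : Fin n → EuclideanSpace ℝ (Fin (d + 1)))
    (hxs' : xs' = Function.update xs ⟨n - 1, Nat.sub_lt hn one_pos⟩ xn')
    (x : EuclideanSpace ℝ (Fin (d + 1))) (hx : ‖x‖ = 1 ∧ sphDist p₀ x < r) :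
    ‖(1 / (n : ℝ)) • ∑ i, sphLog x (xs i) - (1 / (n : ℝ)) • ∑ i, sphLog x (xs' i)‖ ≤
      (2 * r / n) * (2 - 2 * r * (Real.cos (2 * r) / Real.sin (2 * r))) :=
  sphere_mean_gradient_sensitivity_general d n hn r hr0 hr p₀ hp₀ xs hxs xn' hxn' xs' hxs' x hx
end

section
/- Let d ≥ 1 be an integer, σ > 0, and m ∈ ℝ^d. Let C = (∫_{ℝ^d} e^{−‖x−m‖/σ} dx)^{−1}, so that f(x) = C·e^{−‖x−m‖/σ} is a probability density with respect to Lebesgue measure on ℝ^d (the multivariate Euclidean Laplace density with location m and scale σ). Then ∫_{ℝ^d} ‖x − m‖² f(x) dx = d(d+1)·σ². -/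
/-!
In polar coordinates a Haar measure on a `d`-dimensional space has radial part `c · r^(d-1) dr`,
so `∫ ‖x‖^k e^{-‖x‖/σ} dx = c · σ^(d+k) Γ(d+k)`. Translating to `m = 0`, the second moment is the
ratio of the cases `k = 2` and `k = 0`, namely `σ² Γ(d+2)/Γ(d) = d(d+1)σ²`.
-/

open MeasureTheory

open Metric Set Real

theorem integral_Ioi_pow_mul_exp_neg_div {n : ℕ} (hn : 0 < n) {σ : ℝ} (hσ : 0 < σ) :
    ∫ r in Ioi (0 : ℝ), r ^ (n - 1) * exp (-r / σ) = σ ^ n * Gamma n := by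
  have hpow : ∀ r : ℝ, r ^ (n - 1) = r ^ ((n : ℝ) - 1) := fun r => by
    rw [← rpow_natCast, Nat.cast_pred hn]
  simp_rw [hpow, neg_div, div_eq_inv_mul]
  rw [integral_rpow_mul_exp_neg_mul_Ioi (by exact_mod_cast hn) (inv_pos.2 hσ), one_div, inv_inv,
    rpow_natCast]

section HaarMeasure

variable {E : Type*} [NormedAddCommGroup E] [NormedSpace ℝ E] [FiniteDimensional ℝ E]
  [MeasurableSpace E] [BorelSpace E] [Nontrivial E] (μ : Measure E) [μ.IsAddHaarMeasure]

local notation "dim" => Module.finrank ℝ E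

theorem integral_norm_pow_mul_exp_neg_norm_div (k : ℕ) {σ : ℝ} (hσ : 0 < σ) :
    ∫ x, ‖x‖ ^ k * exp (-‖x‖ / σ) ∂μ =
      dim * μ.real (ball 0 1) * (σ ^ (dim + k) * Gamma ↑(dim + k)) := by
  have hdim : 0 < dim := Module.finrank_pos
  rw [integral_fun_norm_addHaar μ (fun r => r ^ k * exp (-r / σ)), nsmul_eq_mul, smul_eq_mul,
    ← integral_Ioi_pow_mul_exp_neg_div (by omega) hσ, mul_assoc]
  congr 2
  refine setIntegral_congr_fun measurableSet_Ioi fun r _ => ?_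
  rw [smul_eq_mul, ← mul_assoc, ← pow_add]
  congr 2
  omega

theorem integral_exp_neg_norm_div {σ : ℝ} (hσ : 0 < σ) :
    ∫ x, exp (-‖x‖ / σ) ∂μ = dim * μ.real (ball 0 1) * (σ ^ dim * Gamma dim) := by
  simpa using integral_norm_pow_mul_exp_neg_norm_div μ 0 hσ

theorem integral_exp_neg_norm_div_pos {σ : ℝ} (hσ : 0 < σ) :
    0 < ∫ x, exp (-‖x‖ / σ) ∂μ := by
  have hball : 0 < μ.real (ball 0 1) :=
    ENNReal.toReal_pos (measure_ball_pos μ 0 one_pos).ne' measure_ball_lt_top.ne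
  have hdim : (0 : ℝ) < dim := by exact_mod_cast Module.finrank_pos
  rw [integral_exp_neg_norm_div μ hσ]
  exact mul_pos (mul_pos hdim hball) (mul_pos (pow_pos hσ _) (Gamma_pos_of_pos hdim))

theorem integral_norm_sq_mul_exp_neg_norm_div {σ : ℝ} (hσ : 0 < σ) :
    ∫ x, ‖x‖ ^ 2 * exp (-‖x‖ / σ) ∂μ =
      dim * (dim + 1) * σ ^ 2 * ∫ x, exp (-‖x‖ / σ) ∂μ := by
  have hdim : (dim : ℝ) ≠ 0 := by exact_mod_cast Module.finrank_pos.ne'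
  rw [integral_norm_pow_mul_exp_neg_norm_div μ 2 hσ, integral_exp_neg_norm_div μ hσ, pow_add,
    Nat.cast_add, Nat.cast_ofNat, show (dim : ℝ) + 2 = dim + 1 + 1 by ring,
    Gamma_add_one (by positivity), Gamma_add_one hdim]
  ring

end HaarMeasure

/-- Second moment of the multivariate Euclidean Laplace distribution on `ℝ^d` with
location `m` and scale `σ`: if `f(x) = C·e^{−‖x−m‖/σ}` is the normalized density,
then `∫ ‖x − m‖² f(x) dx = d(d+1)σ²`. -/
theorem euclidean_laplace_second_moment (d : ℕ) (hd : 1 ≤ d) (σ : ℝ) (hσ : 0 < σ)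
    (m : EuclideanSpace ℝ (Fin d)) (C : ℝ)
    (hC : C = (∫ x : EuclideanSpace ℝ (Fin d), Real.exp (-‖x - m‖ / σ))⁻¹) :
    ∫ x : EuclideanSpace ℝ (Fin d), ‖x - m‖ ^ 2 * (C * Real.exp (-‖x - m‖ / σ)) =
      (d : ℝ) * ((d : ℝ) + 1) * σ ^ 2 := by
  have : Nontrivial (EuclideanSpace ℝ (Fin d)) :=
    Module.nontrivial_of_finrank_pos (R := ℝ) (by rwa [finrank_euclideanSpace_fin])
  have hZ := integral_exp_neg_norm_div_pos (volume : Measure (EuclideanSpace ℝ (Fin d))) hσ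
  rw [integral_sub_right_eq_self (fun x => exp (-‖x‖ / σ)) m] at hC
  rw [integral_sub_right_eq_self (fun x => ‖x‖ ^ 2 * (C * exp (-‖x‖ / σ))) m]
  simp_rw [mul_left_comm _ C]
  rw [integral_const_mul, integral_norm_sq_mul_exp_neg_norm_div _ hσ, finrank_euclideanSpace_fin,
    hC, mul_comm _ (∫ _, _), ← mul_assoc, inv_mul_cancel₀ hZ.ne', one_mul]
end

section
/- Let k ≥ 1 and let y be a k×k real symmetric positive-definite matrix with eigenvalues λ₁, …, λ_k (necessarily all positive). If (Σ_{i=1}^{k} (log λ_i)²)^{1/2} ≤ r for some r > 0, then ‖y − I_k‖_F ≤ e^r − 1, where ‖·‖_F denotes the Frobenius norm and I_k the identity matrix. -/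
/-!
Diagonalising `y`, the Frobenius distance from `y` to `1` is the Euclidean norm of the vector
`(exp tᵢ - 1)ᵢ` with `tᵢ = log λᵢ`. For `|t| ≤ a`, convexity of `exp` on `[0, a]` gives
`|exp t - 1| ≤ exp |t| - 1 ≤ (|t| / a) (exp a - 1)`; taking `a = ‖t‖` and summing squares
yields `‖exp t - 1‖ ≤ exp ‖t‖ - 1`.
-/

open Real

lemma abs_exp_sub_one_le_exp_abs_sub_one (t : ℝ) : |exp t - 1| ≤ exp |t| - 1 := by
  rcases le_or_gt 0 t with ht | ht
  · rw [abs_of_nonneg ht, abs_of_nonneg (sub_nonneg.2 (one_le_exp ht))]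
  · rw [abs_of_nonpos (sub_nonpos.2 (exp_le_one_iff.2 ht.le)), abs_of_neg ht, neg_sub]
    calc 1 - exp t = exp t * (exp (-t) - 1) := by
          rw [mul_sub, ← exp_add, add_neg_cancel, exp_zero, mul_one]
      _ ≤ exp (-t) - 1 := mul_le_of_le_one_left (sub_nonneg.2 (one_le_exp (neg_nonneg.2 ht.le)))
          (exp_le_one_iff.2 ht.le)

lemma mul_exp_sub_one_le_of_le {s a : ℝ} (hs : 0 ≤ s) (hsa : s ≤ a) :
    a * (exp s - 1) ≤ s * (exp a - 1) := by
  rcases hs.eq_or_lt with rfl | hs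
  · simp
  rcases hsa.eq_or_lt with rfl | hsa
  · rfl
  have := convexOn_exp.secant_mono_aux1 (Set.mem_univ 0) (Set.mem_univ a) hs hsa
  simp only [sub_zero, exp_zero, mul_one] at this
  linarith

lemma mul_abs_exp_sub_one_le {t a : ℝ} (h : |t| ≤ a) :
    a * |exp t - 1| ≤ |t| * (exp a - 1) :=
  calc a * |exp t - 1| ≤ a * (exp |t| - 1) :=
        mul_le_mul_of_nonneg_left (abs_exp_sub_one_le_exp_abs_sub_one t) ((abs_nonneg t).trans h)
    _ ≤ |t| * (exp a - 1) := mul_exp_sub_one_le_of_le (abs_nonneg t) h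

lemma sqrt_sum_sq_exp_sub_one_le {ι : Type*} [Fintype ι] (t : ι → ℝ) :
    √(∑ i, (exp (t i) - 1) ^ 2) ≤ exp √(∑ i, t i ^ 2) - 1 := by
  set a := √(∑ i, t i ^ 2) with ha_def
  have hta (i : ι) : |t i| ≤ a :=
    abs_le_sqrt (Finset.single_le_sum (fun j _ => sq_nonneg (t j)) (Finset.mem_univ i))
  rcases (sqrt_nonneg _ : 0 ≤ a).eq_or_lt with ha | ha
  · have ht (i : ι) : t i = 0 := abs_nonpos_iff.1 (ha ▸ hta i)
    simp [ht, ha_def]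
  have hscaled : a ^ 2 * ∑ i, (exp (t i) - 1) ^ 2 ≤ a ^ 2 * (exp a - 1) ^ 2 :=
    calc a ^ 2 * ∑ i, (exp (t i) - 1) ^ 2 = ∑ i, (a * |exp (t i) - 1|) ^ 2 := by
          simp only [Finset.mul_sum, mul_pow, sq_abs]
      _ ≤ ∑ i, (|t i| * (exp a - 1)) ^ 2 :=
          Finset.sum_le_sum fun i _ =>
            pow_le_pow_left₀ (by positivity) (mul_abs_exp_sub_one_le (hta i)) 2
      _ = a ^ 2 * (exp a - 1) ^ 2 := by
          simp only [mul_pow, sq_abs, ← Finset.sum_mul, ha_def,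
            sq_sqrt (Finset.sum_nonneg fun i _ => sq_nonneg (t i))]
  rw [sqrt_le_left (sub_nonneg.2 (one_le_exp ha.le))]
  exact le_of_mul_le_mul_left hscaled (by positivity)

open Unitary

namespace Matrix

lemma sum_sum_sq_eq_trace_mul_conjTranspose {m n : Type*} [Fintype m] [Fintype n]
    (M : Matrix m n ℝ) : ∑ i, ∑ j, M i j ^ 2 = trace (M * Mᴴ) := by
  simp [trace, mul_apply, sq]

variable {n : Type*} [Fintype n] [DecidableEq n]

lemma trace_conjStarAlgAut {R : Type*} [CommRing R] [StarRing R] (u : unitaryGroup n R)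
    (x : Matrix n n R) : trace (conjStarAlgAut R _ u x) = trace x := by
  rw [conjStarAlgAut_apply, trace_mul_cycle, coe_star_mul_self, one_mul]

lemma IsHermitian.sum_sum_sq_sub_one {A : Matrix n n ℝ} (hA : A.IsHermitian) :
    ∑ i, ∑ j, (A - 1) i j ^ 2 = ∑ i, (hA.eigenvalues i - 1) ^ 2 := by
  set φ := conjStarAlgAut ℝ _ hA.eigenvectorUnitary
  have hdiag : A - 1 = φ (diagonal fun i => hA.eigenvalues i - 1) := by
    conv_lhs => rw [hA.spectral_theorem]
    rw [← map_one φ, ← map_sub, ← diagonal_one, diagonal_sub]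
    rfl
  rw [sum_sum_sq_eq_trace_mul_conjTranspose, hdiag, ← star_eq_conjTranspose, ← map_star,
    ← map_mul, trace_conjStarAlgAut]
  simp [star_eq_conjTranspose, sq]

end Matrix

theorem spd_log_ball_in_frobenius_ball_general (k : ℕ)
    (y : Matrix (Fin k) (Fin k) ℝ) (hsymm : y.IsHermitian) (hpos : y.PosDef)
    (r : ℝ)
    (hball : Real.sqrt (∑ i, Real.log (hsymm.eigenvalues i) ^ 2) ≤ r) :
    Real.sqrt (∑ i, ∑ j, (y i j - (1 : Matrix (Fin k) (Fin k) ℝ) i j) ^ 2) ≤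
      Real.exp r - 1 := by
  have hexp_log (i : Fin k) : exp (log (hsymm.eigenvalues i)) = hsymm.eigenvalues i :=
    exp_log (hpos.eigenvalues_pos i)
  calc √(∑ i, ∑ j, (y i j - (1 : Matrix (Fin k) (Fin k) ℝ) i j) ^ 2)
      = √(∑ i, (exp (log (hsymm.eigenvalues i)) - 1) ^ 2) := by
        simp only [← Matrix.sub_apply, hsymm.sum_sum_sq_sub_one, hexp_log]
    _ ≤ exp √(∑ i, log (hsymm.eigenvalues i) ^ 2) - 1 := sqrt_sum_sq_exp_sub_one_le _
    _ ≤ exp r - 1 := by gcongr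

/-- If `y` is a `k×k` real symmetric positive-definite matrix whose eigenvalues
`λ₁,…,λ_k` satisfy `(Σ (log λ_i)²)^{1/2} ≤ r`, then the Frobenius distance from `y`
to the identity satisfies `‖y − I‖_F ≤ e^r − 1`. -/
theorem spd_log_ball_in_frobenius_ball (k : ℕ) (hk : 1 ≤ k)
    (y : Matrix (Fin k) (Fin k) ℝ) (hsymm : y.IsHermitian) (hpos : y.PosDef)
    (r : ℝ) (hr : 0 < r)
    (hball : Real.sqrt (∑ i, Real.log (hsymm.eigenvalues i) ^ 2) ≤ r) :
    Real.sqrt (∑ i, ∑ j, (y i j - (1 : Matrix (Fin k) (Fin k) ℝ) i j) ^ 2) ≤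
      Real.exp r - 1 :=
  spd_log_ball_in_frobenius_ball_general k y hsymm hpos r hball
end

section
/- Let d ≥ 1, n ≥ 1, r > 0, ε > 0, and p₀ ∈ ℝ^d, and set σ = 4r/(nε). For a dataset D = {x₁,…,xₙ} contained in the closed ball of radius r centered at p₀, let x̄_D = (1/n)Σ x_i be its mean and f_D(x) = C_D·exp(−‖x̄_D − x‖/σ), where C_D = (∫_{ℝ^d} exp(−‖x̄_D − x‖/σ) dx)^{−1}. Then for any two such datasets D, D' differing in exactly one element and any measurable S ⊆ ℝ^d: ∫_S f_D(x) dx ≤ e^ε · ∫_S f_{D'}(x) dx. -/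
open MeasureTheory

/-- ε-differential privacy of the Euclidean Laplace (= KNG) mechanism for mean
estimation (Theorems 1 and 2, Euclidean case): for datasets in a ball of radius `r`,
with `σ = 4r/(nε)` and `f_D(x) = C_D e^{−‖x̄_D − x‖/σ}` the normalized Laplace density
centered at the sample mean, `∫_S f_D ≤ e^ε ∫_S f_{D'}` for adjacent `D, D'`. -/
theorem euclidean_laplace_mean_privacy (d n : ℕ) (hd : 1 ≤ d) (hn : 1 ≤ n)
    (r ε : ℝ) (hr : 0 < r) (hε : 0 < ε)
    (p₀ : EuclideanSpace ℝ (Fin d)) (σ : ℝ) (hσ : σ = 4 * r / (n * ε))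
    (xs xs' : Fin n → EuclideanSpace ℝ (Fin d))
    (hxs : ∀ i, xs i ∈ Metric.closedBall p₀ r)
    (hxs' : ∀ i, xs' i ∈ Metric.closedBall p₀ r)
    (hadj : ∃ j : Fin n, xs j ≠ xs' j ∧ ∀ i : Fin n, i ≠ j → xs i = xs' i)
    (xbar xbar' : EuclideanSpace ℝ (Fin d))
    (hxbar : xbar = (1 / (n : ℝ)) • ∑ i, xs i)
    (hxbar' : xbar' = (1 / (n : ℝ)) • ∑ i, xs' i)
    (C C' : ℝ)
    (hC : C = (∫ x : EuclideanSpace ℝ (Fin d), Real.exp (-‖xbar - x‖ / σ))⁻¹)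
    (hC' : C' = (∫ x : EuclideanSpace ℝ (Fin d), Real.exp (-‖xbar' - x‖ / σ))⁻¹)
    (S : Set (EuclideanSpace ℝ (Fin d))) (hS : MeasurableSet S) :
    ∫ x in S, C * Real.exp (-‖xbar - x‖ / σ) ≤
      Real.exp ε * ∫ x in S, C' * Real.exp (-‖xbar' - x‖ / σ) := by
  have hn0 : (0 : ℝ) < n := by exact_mod_cast hn
  have hσ0 : 0 < σ := by
    rw [hσ]; positivity
  -- distance between the two means
  obtain ⟨j, hj, hji⟩ := hadj
  have hsum : (∑ i, xs i) - (∑ i, xs' i) = xs j - xs' j := by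
    rw [← Finset.sum_sub_distrib]
    rw [Finset.sum_eq_single j]
    · intro i _ hij
      rw [hji i hij, sub_self]
    · intro h; exact absurd (Finset.mem_univ j) h
  have hmean : ‖xbar - xbar'‖ ≤ 2 * r / n := by
    have h1 : ‖xs j - xs' j‖ ≤ 2 * r := by
      have a1 := hxs j
      have a2 := hxs' j
      rw [Metric.mem_closedBall, dist_eq_norm] at a1 a2
      have e : xs j - xs' j = (xs j - p₀) - (xs' j - p₀) := by abel
      rw [e]
      have := norm_sub_le (xs j - p₀) (xs' j - p₀)
      linarith
    rw [hxbar, hxbar', ← smul_sub, hsum, norm_smul, Real.norm_eq_abs,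
      abs_of_pos (by positivity : (0:ℝ) < 1 / n)]
    calc (1 / (n:ℝ)) * ‖xs j - xs' j‖ ≤ (1 / (n:ℝ)) * (2 * r) := by gcongr
      _ = 2 * r / n := by ring
  have hεσ : 2 * r / (n:ℝ) ≤ ε * σ := by
    have he : ε * σ = 4 * r / n := by
      rw [hσ]; field_simp
    rw [he]
    gcongr
    linarith
  -- key pointwise bound
  have hpt : ∀ x : EuclideanSpace ℝ (Fin d),
      Real.exp (-‖xbar - x‖ / σ) ≤ Real.exp ε * Real.exp (-‖xbar' - x‖ / σ) := by
    intro x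
    rw [← Real.exp_add, Real.exp_le_exp]
    have h3 : ‖xbar' - x‖ - ‖xbar - x‖ ≤ ‖xbar' - xbar‖ := by
      simpa using norm_sub_norm_le (xbar' - x) (xbar - x)
    have h4 : ‖xbar' - xbar‖ ≤ 2 * r / n := by rwa [norm_sub_rev]
    have key : ‖xbar' - x‖ - ‖xbar - x‖ ≤ ε * σ := le_trans h3 (le_trans h4 hεσ)
    have h6 : -‖xbar - x‖ / σ - -‖xbar' - x‖ / σ ≤ ε := by
      rw [div_sub_div_same, div_le_iff₀ hσ0]
      linarith
    linarith
  -- symmetric pointwise bound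
  have hpt' : ∀ x : EuclideanSpace ℝ (Fin d),
      Real.exp (-‖xbar' - x‖ / σ) ≤ Real.exp ε * Real.exp (-‖xbar - x‖ / σ) := by
    intro x
    rw [← Real.exp_add, Real.exp_le_exp]
    have h3 : ‖xbar - x‖ - ‖xbar' - x‖ ≤ ‖xbar - xbar'‖ := by
      simpa using norm_sub_norm_le (xbar - x) (xbar' - x)
    have key : ‖xbar - x‖ - ‖xbar' - x‖ ≤ ε * σ := le_trans h3 (le_trans hmean hεσ)
    have h6 : -‖xbar' - x‖ / σ - -‖xbar - x‖ / σ ≤ ε := by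
      rw [div_sub_div_same, div_le_iff₀ hσ0]
      linarith
    linarith
  -- translation invariance: the two normalizing integrals agree
  have htrans : ∀ c : EuclideanSpace ℝ (Fin d),
      (∫ x : EuclideanSpace ℝ (Fin d), Real.exp (-‖c - x‖ / σ)) =
      ∫ x : EuclideanSpace ℝ (Fin d), Real.exp (-‖x‖ / σ) := by
    intro c
    have : ∀ x : EuclideanSpace ℝ (Fin d), ‖c - x‖ = ‖x - c‖ := fun x => norm_sub_rev c x
    simp_rw [this]
    exact integral_sub_right_eq_self (fun y : EuclideanSpace ℝ (Fin d) => Real.exp (-‖y‖ / σ)) c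
  have hCC' : C = C' := by rw [hC, hC', htrans, htrans]
  have hcont : Continuous fun x : EuclideanSpace ℝ (Fin d) => Real.exp (-‖xbar - x‖ / σ) := by
    fun_prop
  have hcont' : Continuous fun x : EuclideanSpace ℝ (Fin d) => Real.exp (-‖xbar' - x‖ / σ) := by
    fun_prop
  by_cases hint : Integrable (fun x : EuclideanSpace ℝ (Fin d) => Real.exp (-‖xbar' - x‖ / σ))
  · -- integrable case
    have hint2 : Integrable (fun x : EuclideanSpace ℝ (Fin d) => Real.exp (-‖xbar - x‖ / σ)) := by
      apply Integrable.mono' (hint.const_mul (Real.exp ε)) hcont.aestronglyMeasurable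
      filter_upwards with x
      rw [Real.norm_eq_abs, abs_of_pos (Real.exp_pos _)]
      exact hpt x
    have hCpos : 0 ≤ C := by
      rw [hC]
      apply inv_nonneg.mpr
      apply integral_nonneg
      intro x; exact (Real.exp_pos _).le
    calc ∫ x in S, C * Real.exp (-‖xbar - x‖ / σ)
        ≤ ∫ x in S, Real.exp ε * (C' * Real.exp (-‖xbar' - x‖ / σ)) := by
          apply setIntegral_mono_on
          · exact (hint2.const_mul C).integrableOn
          · exact ((hint.const_mul C').const_mul (Real.exp ε)).integrableOn
          · exact hS
          · intro x _
            rw [← hCC']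
            calc C * Real.exp (-‖xbar - x‖ / σ)
                ≤ C * (Real.exp ε * Real.exp (-‖xbar' - x‖ / σ)) :=
                  mul_le_mul_of_nonneg_left (hpt x) hCpos
              _ = Real.exp ε * (C * Real.exp (-‖xbar' - x‖ / σ)) := by ring
      _ = Real.exp ε * ∫ x in S, C' * Real.exp (-‖xbar' - x‖ / σ) := by
          rw [integral_const_mul]
  · -- non-integrable case: both constants vanish
    have hint2 : ¬ Integrable (fun x : EuclideanSpace ℝ (Fin d) => Real.exp (-‖xbar - x‖ / σ)) := by
      intro h
      apply hint
      apply Integrable.mono' (h.const_mul (Real.exp ε)) hcont'.aestronglyMeasurable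
      filter_upwards with x
      rw [Real.norm_eq_abs, abs_of_pos (Real.exp_pos _)]
      exact hpt' x
    have hC0 : C = 0 := by rw [hC, integral_undef hint2, inv_zero]
    have hC'0 : C' = 0 := by rw [hC', integral_undef hint, inv_zero]
    simp [hC0, hC'0]
end
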